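/- Let u be an extended odometer on [0,n] stable on [1,n−1] with u(0) ≥ 0 and u(n) ≥ 0, and let f_v = R_u(v) − L_u(v+1). Suppose there exists k such that f_v ≤ 0 for 0 ≤ v < k and f_v ≥ 1 for k ≤ v ≤ n. Then u(v) ≥ 0 for all v ∈ [0,n]. -/

import Mathlib

/-- ARW instructions. -/
inductive Instr : Type
  | left
  | right
  | sleep
deriving DecidableEq

/-- Signed count of `left` instructions executed at site `v` by the extended
odometer `u`. -/
noncomputable def Lcount (instr : ℤ → ℤ → Instr) (u : ℤ → ℤ) (v : ℤ) : ℤ :=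
  if 0 ≤ u v then
    (((Finset.Icc 1 (u v)).filter fun i => instr v i = Instr.left).card : ℤ)
  else
    -((((Finset.Icc (u v + 1) 0).filter fun i => instr v i = Instr.left).card : ℤ))

/-- Signed count of `right` instructions executed at site `v` by `u`. -/
noncomputable def Rcount (instr : ℤ → ℤ → Instr) (u : ℤ → ℤ) (v : ℤ) : ℤ :=
  if 0 ≤ u v then
    (((Finset.Icc 1 (u v)).filter fun i => instr v i = Instr.right).card : ℤ)
  else
    -((((Finset.Icc (u v + 1) 0).filter fun i => instr v i = Instr.right).card : ℤ))

/-- The number of particles left at `v` by the extended odometer `u`. -/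
noncomputable def height (instr : ℤ → ℤ → Instr) (σ : ℤ → ℕ) (u : ℤ → ℤ) (v : ℤ) : ℤ :=
  (σ v : ℤ) + Rcount instr u (v - 1) + Lcount instr u (v + 1)
    - Lcount instr u v - Rcount instr u v

/-- Stability of the extended odometer `u` at site `v`. -/
def StableAt (instr : ℤ → ℤ → Instr) (σ : ℤ → ℕ) (u : ℤ → ℤ) (v : ℤ) : Prop :=
  (height instr σ u v = 0 ∨ height instr σ u v = 1) ∧
    (height instr σ u v = 1 ↔ instr v (u v) = Instr.sleep)

/-!
If `u v ≤ 0`, the right-count at `v` is `≤ 0`; a flow `R_u(v) − L_u(v+1) ≥ 1` then forces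
`L_u(v+1) < 0`, i.e. `u (v+1) < 0`. Symmetrically, if `u v < 0` then instruction `0` (a left one)
is undone at `v`, so `L_u(v) ≤ -1`, and a flow `R_u(v−1) − L_u(v) ≤ 0` forces `u (v−1) < 0`.
Hence a negative value at some `v ≥ k` propagates right up to `n`, and one at some `v < k`
propagates left down to `0`, contradicting `u 0 ≥ 0` and `u n ≥ 0`.
-/

section Odometer

variable (instr : ℤ → ℤ → Instr) (u : ℤ → ℤ)

lemma Lcount_nonneg {v : ℤ} (h : 0 ≤ u v) : 0 ≤ Lcount instr u v := by
  simp only [Lcount, if_pos h]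
  positivity

lemma Rcount_nonneg {v : ℤ} (h : 0 ≤ u v) : 0 ≤ Rcount instr u v := by
  simp only [Rcount, if_pos h]
  positivity

lemma Rcount_nonpos {v : ℤ} (h : u v ≤ 0) : Rcount instr u v ≤ 0 := by
  rcases h.lt_or_eq with hlt | heq
  · simp only [Rcount, if_neg hlt.not_ge]
    simp
  · simp [Rcount, heq]

lemma Lcount_le_neg_one {v : ℤ} (h0 : instr v 0 = Instr.left) (h : u v < 0) :
    Lcount instr u v ≤ -1 := by
  have hmem : (0 : ℤ) ∈ (Finset.Icc (u v + 1) 0).filter fun i => instr v i = Instr.left := by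
    simp [h0, h]
  have := Finset.card_pos.mpr ⟨0, hmem⟩
  simp only [Lcount, if_neg h.not_ge]
  omega

variable {instr u}

lemma lt_zero_succ_of_one_le_flow {v : ℤ} (hv : u v ≤ 0)
    (hflow : 1 ≤ Rcount instr u v - Lcount instr u (v + 1)) : u (v + 1) < 0 := by
  by_contra! h
  linarith [Rcount_nonpos instr u hv, Lcount_nonneg instr u h]

lemma lt_zero_pred_of_flow_nonpos {v : ℤ} (h0 : instr v 0 = Instr.left) (hv : u v < 0)
    (hflow : Rcount instr u (v - 1) - Lcount instr u v ≤ 0) : u (v - 1) < 0 := by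
  by_contra! h
  linarith [Rcount_nonneg instr u h, Lcount_le_neg_one instr u h0 hv]

lemma lt_zero_right_of_one_le_flow {k n v : ℤ}
    (hflow : ∀ w, k ≤ w → w ≤ n → 1 ≤ Rcount instr u w - Lcount instr u (w + 1))
    (hkv : k ≤ v) (hv : u v < 0) : ∀ w, v ≤ w → w ≤ n → u w < 0 := by
  intro w hvw
  induction w, hvw using Int.leInduction with
  | base => exact fun _ ↦ hv
  | succ w hvw ih =>
    intro hwn
    exact lt_zero_succ_of_one_le_flow (ih (by omega)).le (hflow w (by omega) (by omega))

lemma lt_zero_left_of_flow_nonpos {k v : ℤ} (hinstr0 : ∀ w, instr w 0 = Instr.left)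
    (hflow : ∀ w, 0 ≤ w → w < k → Rcount instr u w - Lcount instr u (w + 1) ≤ 0)
    (hvk : v < k) (hv : u v < 0) : ∀ w ≤ v, 0 ≤ w → u w < 0 := by
  intro w hwv
  induction w, hwv using Int.leInductionDown with
  | base => exact fun _ ↦ hv
  | pred w hwv ih =>
    intro hw
    have := hflow (w - 1) hw (by omega)
    rw [sub_add_cancel] at this
    exact lt_zero_pred_of_flow_nonpos (hinstr0 w) (ih (by omega)) this

end Odometer

theorem odometer_nonneg_of_uniflow_general (instr : ℤ → ℤ → Instr)
    (hinstr0 : ∀ v, instr v 0 = Instr.left)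
    (n : ℤ) (u : ℤ → ℤ)
    (hu0 : 0 ≤ u 0) (hun : 0 ≤ u n)
    (f : ℤ → ℤ) (hf : ∀ v, f v = Rcount instr u v - Lcount instr u (v + 1))
    (k : ℤ)
    (hneg : ∀ v : ℤ, 0 ≤ v → v < k → f v ≤ 0)
    (hpos : ∀ v : ℤ, k ≤ v → v ≤ n → 1 ≤ f v) :
    ∀ v ∈ Finset.Icc (0 : ℤ) n, 0 ≤ u v := by
  simp only [hf] at hneg hpos
  intro v hv
  rw [Finset.mem_Icc] at hv
  by_contra! hv_neg
  rcases lt_or_ge v k with hvk | hkv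
  · exact (lt_zero_left_of_flow_nonpos hinstr0 hneg hvk hv_neg 0 hv.1 le_rfl).not_ge hu0
  · exact (lt_zero_right_of_one_le_flow hpos hkv hv_neg n hv.2 le_rfl).not_ge hun

/-- Lemma 7.3 (`lem:uniflow`): let `u` be an extended odometer on `[0,n]` stable
on `[1,n-1]` with `u 0 ≥ 0` and `u n ≥ 0`, and let `f v = R_u(v) − L_u(v+1)`.
If there is `k` with `f v ≤ 0` for `0 ≤ v < k` and `f v ≥ 1` for `k ≤ v ≤ n`,
then `u v ≥ 0` for all `v ∈ [0,n]`. -/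
theorem odometer_nonneg_of_uniflow (instr : ℤ → ℤ → Instr)
    (hinstr0 : ∀ v, instr v 0 = Instr.left)
    (σ : ℤ → ℕ) (n : ℤ) (u : ℤ → ℤ)
    (hsupp : ∀ v : ℤ, v ∉ Finset.Icc (0 : ℤ) n → u v = 0)
    (hstable : ∀ v ∈ Finset.Icc (1 : ℤ) (n - 1), StableAt instr σ u v)
    (hu0 : 0 ≤ u 0) (hun : 0 ≤ u n)
    (f : ℤ → ℤ) (hf : ∀ v, f v = Rcount instr u v - Lcount instr u (v + 1))
    (k : ℤ)
    (hneg : ∀ v : ℤ, 0 ≤ v → v < k → f v ≤ 0)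
    (hpos : ∀ v : ℤ, k ≤ v → v ≤ n → 1 ≤ f v) :
    ∀ v ∈ Finset.Icc (0 : ℤ) n, 0 ≤ u v :=
  odometer_nonneg_of_uniflow_general instr hinstr0 n u hu0 hun f hf k hneg hpos
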